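/- Let U ⊆ ℂ be open and let f : U → ℂ² be holomorphic with f'(z) ≠ 0 and f^N(z) ≠ 0 for all z ∈ U. Then the map z ↦ conj(f*(z)) (componentwise complex conjugation of f*(z) = f^N(z)/(2‖f^N(z)‖²)) is holomorphic on U; that is, the dual f* of the holomorphic curve f is an anti-holomorphic curve in ℂ². -/

import Mathlib

open scoped BigOperators ComplexConjugate

/-- The Hermitian inner product `⟪Z,W⟫ = Z₁·conj W₁ + Z₂·conj W₂` on `ℂ²`
(linear in the first slot). -/
noncomputable def herm (Z W : Fin 2 → ℂ) : ℂ := ∑ j, Z j * conj (W j)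

/-- The normal component of the position vector of a holomorphic curve `f : U → ℂ²`:
`f^N(z) = f(z) − (⟪f z, f' z⟫/⟪f' z, f' z⟫)·f'(z)`. -/
noncomputable def posN (f : ℂ → Fin 2 → ℂ) (z : ℂ) : Fin 2 → ℂ :=
  f z - (herm (f z) (deriv f z) / herm (deriv f z) (deriv f z)) • deriv f z

/-- The dual curve `f*(z) = f^N(z)/(2‖f^N(z)‖²)`; note `‖f^N(z)‖² = ⟪f^N z, f^N z⟫`. -/
noncomputable def dualCurve (f : ℂ → Fin 2 → ℂ) (z : ℂ) : Fin 2 → ℂ :=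
  (2 * herm (posN f z) (posN f z))⁻¹ • posN f z

/-!
In `ℂ²` the Hermitian orthogonal complement of `V ≠ 0` is spanned by `conj (V₂, -V₁)`, so the
normal part of `Z` is `(det (Z, V) / ⟪V,V⟫) · conj (V₂, -V₁)`. Inverting a vector of the form
`c · conj u` in the sense `N ↦ N / ‖N‖²` and conjugating gives `u / (c ‖u‖²)`, whence
`conj f* = (V₂, -V₁) / (2 det (f, f'))` with `V = f'`. This is holomorphic wherever
`det (f, f') ≠ 0`, which is exactly the condition `f^N ≠ 0`.
-/

def perp (V : Fin 2 → ℂ) : Fin 2 → ℂ := ![V 1, -V 0]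

def wedge (Z V : Fin 2 → ℂ) : ℂ := Z 0 * V 1 - Z 1 * V 0

lemma herm_fin_two (Z W : Fin 2 → ℂ) : herm Z W = Z 0 * conj (W 0) + Z 1 * conj (W 1) := by
  simp [herm, Fin.sum_univ_two]

lemma herm_self_ne_zero {V : Fin 2 → ℂ} (hV : V ≠ 0) : herm V V ≠ 0 := by
  have hsum : herm V V = ((∑ j, Complex.normSq (V j) : ℝ) : ℂ) := by
    simp [herm, Complex.mul_conj]
  rw [hsum, Complex.ofReal_ne_zero]
  intro h
  apply hV
  ext j
  rw [Finset.sum_eq_zero_iff_of_nonneg (fun j _ => Complex.normSq_nonneg _)] at h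
  simpa using h j (Finset.mem_univ j)

lemma conj_herm_self (V : Fin 2 → ℂ) : conj (herm V V) = herm V V := by
  simp only [herm_fin_two, map_add, map_mul, Complex.conj_conj]
  ring

lemma herm_perp_self (V : Fin 2 → ℂ) : herm (perp V) (perp V) = herm V V := by
  simp only [perp, herm_fin_two, Matrix.cons_val_zero, Matrix.cons_val_one,
    Matrix.cons_val_fin_one, map_neg, mul_neg, neg_mul, neg_neg]
  ring

lemma herm_smul_star_self (c : ℂ) (u : Fin 2 → ℂ) :
    herm (c • star u) (c • star u) = c * conj c * herm u u := by
  simp only [herm_fin_two, Pi.smul_apply, Pi.star_apply, RCLike.star_def, smul_eq_mul, map_mul,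
    Complex.conj_conj]
  ring

lemma sub_herm_div_smul_eq (Z V : Fin 2 → ℂ) (hV : V ≠ 0) :
    Z - (herm Z V / herm V V) • V = (wedge Z V / herm V V) • star (perp V) := by
  have hn := herm_self_ne_zero hV
  ext j
  fin_cases j <;>
  · simp only [Fin.zero_eta, Fin.mk_one, Pi.sub_apply, Pi.smul_apply, smul_eq_mul, wedge, perp,
      Pi.star_apply, Matrix.cons_val_zero, Matrix.cons_val_one, Matrix.cons_val_fin_one,
      star_neg, RCLike.star_def, mul_neg]
    field_simp
    simp only [herm_fin_two]
    ring

lemma star_inv_two_herm_smul (c : ℂ) (u : Fin 2 → ℂ) :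
    star ((2 * herm (c • star u) (c • star u))⁻¹ • (c • star u)) = (2 * c * herm u u)⁻¹ • u := by
  rcases eq_or_ne c 0 with rfl | hc
  · simp
  have hc' : conj c ≠ 0 := (map_ne_zero _).mpr hc
  rw [herm_smul_star_self, star_smul, star_smul, star_star, smul_smul]
  congr 1
  simp only [Complex.star_def, map_inv₀, map_mul, map_ofNat, Complex.conj_conj, conj_herm_self]
  rw [show 2 * (conj c * c * herm u u) = conj c * (2 * c * herm u u) by ring, mul_inv,
    mul_comm, ← mul_assoc, mul_inv_cancel₀ hc', one_mul]

lemma star_dualCurve (f : ℂ → Fin 2 → ℂ) (z : ℂ) (hV : deriv f z ≠ 0) :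
    star (dualCurve f z) = (2 * wedge (f z) (deriv f z))⁻¹ • perp (deriv f z) := by
  rw [dualCurve, posN, sub_herm_div_smul_eq _ _ hV, star_inv_two_herm_smul, herm_perp_self,
    mul_assoc, div_mul_cancel₀ _ (herm_self_ne_zero hV)]

lemma wedge_ne_zero_of_posN_ne_zero {f : ℂ → Fin 2 → ℂ} {z : ℂ} (hV : deriv f z ≠ 0)
    (hN : posN f z ≠ 0) : wedge (f z) (deriv f z) ≠ 0 := by
  intro hw
  rw [posN, sub_herm_div_smul_eq _ _ hV, hw, zero_div, zero_smul] at hN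
  exact hN rfl

section Differentiability

variable {Z V : ℂ → Fin 2 → ℂ} {z : ℂ}

lemma DifferentiableAt.wedge (hZ : DifferentiableAt ℂ Z z) (hV : DifferentiableAt ℂ V z) :
    DifferentiableAt ℂ (fun w => wedge (Z w) (V w)) z := by
  have hZj := differentiableAt_pi.1 hZ
  have hVj := differentiableAt_pi.1 hV
  unfold _root_.wedge
  fun_prop

lemma DifferentiableAt.perp (hV : DifferentiableAt ℂ V z) :
    DifferentiableAt ℂ (fun w => perp (V w)) z := by
  have hVj := differentiableAt_pi.1 hV
  refine differentiableAt_pi.2 fun j => ?_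
  fin_cases j
  · exact hVj 1
  · exact (hVj 0).neg

end Differentiability

/-- For a holomorphic curve `f : U → ℂ²` with `f' ≠ 0` and `f^N ≠ 0` on `U`, the dual
curve `f*` is anti-holomorphic: `z ↦ conj (f*(z))` (componentwise) is holomorphic. -/
theorem dualCurve_antiholomorphic (U : Set ℂ) (hU : IsOpen U)
    (f : ℂ → Fin 2 → ℂ)
    (hf : ∀ z ∈ U, DifferentiableAt ℂ f z)
    (hf' : ∀ z ∈ U, deriv f z ≠ 0)
    (hfN : ∀ z ∈ U, posN f z ≠ 0) :
    ∀ z ∈ U, DifferentiableAt ℂ (fun w => fun j => conj (dualCurve f w j)) z := by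
  intro z hz
  have hfU : DifferentiableOn ℂ f U := fun w hw => (hf w hw).differentiableWithinAt
  have hf'z : DifferentiableAt ℂ (deriv f) z := (hfU.deriv hU).differentiableAt (hU.mem_nhds hz)
  have hwedge : wedge (f z) (deriv f z) ≠ 0 := wedge_ne_zero_of_posN_ne_zero (hf' z hz) (hfN z hz)
  have hformula : DifferentiableAt ℂ
      (fun w => (2 * wedge (f w) (deriv f w))⁻¹ • perp (deriv f w)) z :=
    ((((hf z hz).wedge hf'z).const_mul 2).inv (mul_ne_zero two_ne_zero hwedge)).smul hf'z.perp
  refine hformula.congr_of_eventuallyEq ?_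
  filter_upwards [hU.mem_nhds hz] with w hw
  exact star_dualCurve f w (hf' w hw)
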